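/- For q ∈ L¹[0,1] with ∫₀¹ q = 0, the integral ∫₀¹ (Q(x,n) − Q₀(n))² e^{−8πinx} dx is o(1/n) as n → ∞, where Q(x,n) = ∫₀ˣ q(t)e^{4πint} dt − q_{−2n}x and Q₀(n) is its mean over [0,1]. -/

import Mathlib

/-!
Let `g(t) = q(t) e^{4πint} - q_{-2n}`, so that `Q(x, n) = ∫₀ˣ g` on `[0, 1]`. Then `(Q - Q₀)²` is,
up to the constant `Q₀²`, the primitive of `2 g (Q - Q₀)`, and exchanging the order of integration
(an integration by parts whose boundary terms cancel because `e^{-8πin} = 1`) turns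
`n ∫₀¹ (Q - Q₀)² e^{-8πinx} dx` into `(8πi)⁻¹ ∫₀¹ 2 g (Q - Q₀) (e^{-8πint} - 1) dt`. Here `|g| ≤ |q| + ‖q‖₁`, while `Q(·, n)` and `Q₀(n)` are bounded by `2‖q‖₁` and tend to zero
pointwise by the Riemann–Lebesgue lemma, so the last integral tends to zero by dominated
convergence.
-/

open MeasureTheory Filter Set Topology Complex Interval

section Primitive

variable {𝕜 : Type*} [RCLike 𝕜] {a b : ℝ}

theorem integral_mul_primitive_eq_integral_mul_tail {e g : ℝ → 𝕜} (hab : a ≤ b)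
    (he : IntervalIntegrable e volume a b) (hg : IntervalIntegrable g volume a b) :
    ∫ x in a..b, e x * ∫ t in a..x, g t = ∫ t in a..b, g t * ∫ x in t..b, e x := by
  rw [intervalIntegrable_iff_integrableOn_Ioc_of_le hab] at he hg
  set F : ℝ × ℝ → 𝕜 := {p | p.2 ≤ p.1}.indicator fun p => e p.1 * g p.2
  have hF : Integrable F ((volume.restrict (Ioc a b)).prod (volume.restrict (Ioc a b))) :=
    (he.mul_prod hg).indicator (measurableSet_le measurable_snd measurable_fst)
  have h_inner : ∀ x ∈ Ioc a b, ∫ t in Ioc a b, F (x, t) = e x * ∫ t in a..x, g t := by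
    intro x hx
    have : (fun t => F (x, t)) = (Iic x).indicator fun t => e x * g t := by
      ext t; simp [F, indicator_apply]
    rw [this, setIntegral_indicator measurableSet_Iic, Ioc_inter_Iic, min_eq_right hx.2,
      integral_const_mul, intervalIntegral.integral_of_le hx.1.le]
  have h_outer : ∀ t ∈ Ioc a b, ∫ x in Ioc a b, F (x, t) = g t * ∫ x in t..b, e x := by
    intro t ht
    have : (fun x => F (x, t)) = (Ici t).indicator fun x => g t * e x := by
      ext x; simp [F, indicator_apply, mul_comm]
    have hset : Ioc a b ∩ Ici t = Icc t b := by
      ext x; simp only [mem_inter_iff, mem_Ioc, mem_Ici, mem_Icc]; grind [ht.1]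
    rw [this, setIntegral_indicator measurableSet_Ici, hset, integral_Icc_eq_integral_Ioc,
      integral_const_mul, intervalIntegral.integral_of_le ht.2]
  rw [intervalIntegral.integral_of_le hab, intervalIntegral.integral_of_le hab]
  calc ∫ x in Ioc a b, e x * ∫ t in a..x, g t
      = ∫ x in Ioc a b, ∫ t in Ioc a b, F (x, t) :=
        (setIntegral_congr_fun measurableSet_Ioc h_inner).symm
    _ = ∫ t in Ioc a b, ∫ x in Ioc a b, F (x, t) := integral_integral_swap hF
    _ = _ := setIntegral_congr_fun measurableSet_Ioc h_outer

theorem sq_integral_sub_eq_add_integral {g : ℝ → 𝕜} (hab : a ≤ b)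
    (hg : IntervalIntegrable g volume a b) (c : 𝕜) :
    ((∫ t in a..b, g t) - c) ^ 2 = c ^ 2 + ∫ t in a..b, 2 * g t * ((∫ s in a..t, g s) - c) := by
  set G := fun x => ∫ s in a..x, g s
  have hgG : IntervalIntegrable (fun t => g t * G t) volume a b :=
    hg.mul_continuousOn (intervalIntegral.continuousOn_primitive_interval' hg left_mem_uIcc)
  have h_swap : ∫ t in a..b, g t * G t = ∫ t in a..b, g t * (G b - G t) := by
    rw [integral_mul_primitive_eq_integral_mul_tail hab hg hg]
    refine intervalIntegral.integral_congr fun t ht => ?_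
    rw [intervalIntegral.integral_interval_sub_left hg (hg.mono_set (uIcc_subset_uIcc_left ht))]
  have h_two : 2 * ∫ t in a..b, g t * G t = G b ^ 2 := by
    rw [intervalIntegral.integral_congr (g := fun t => g t * G b - g t * G t)
      (fun t _ => mul_sub _ _ _), intervalIntegral.integral_sub (hg.mul_const _) hgG,
      intervalIntegral.integral_mul_const] at h_swap
    linear_combination h_swap
  change (G b - c) ^ 2 = c ^ 2 + ∫ t in a..b, 2 * g t * (G t - c)
  rw [intervalIntegral.integral_congr (g := fun t => 2 * (g t * G t) - 2 * c * g t)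
      (fun t _ => by ring), intervalIntegral.integral_sub (hgG.const_mul _) (hg.const_mul _),
    intervalIntegral.integral_const_mul, intervalIntegral.integral_const_mul, h_two]
  ring

theorem integral_sq_primitive_sub_mul_exp {g : ℝ → ℂ} {κ : ℂ} (hab : a ≤ b)
    (hg : IntervalIntegrable g volume a b) (hκ : κ ≠ 0) (hper : exp (κ * b) = exp (κ * a))
    (c : ℂ) :
    ∫ x in a..b, ((∫ t in a..x, g t) - c) ^ 2 * exp (κ * x) =
      κ⁻¹ * ∫ t in a..b, g t * (2 * ((∫ s in a..t, g s) - c) * (exp (κ * a) - exp (κ * t))) := by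
  set G := fun x => ∫ s in a..x, g s
  set φ := fun t => 2 * g t * (G t - c)
  have hφ : IntervalIntegrable φ volume a b :=
    (hg.const_mul 2).mul_continuousOn
      ((intervalIntegral.continuousOn_primitive_interval' hg left_mem_uIcc).sub continuousOn_const)
  have he : Continuous fun x : ℝ => exp (κ * x) := by fun_prop
  have h_exp : ∀ t, ∫ x in t..b, exp (κ * x) = (exp (κ * a) - exp (κ * t)) / κ := fun t => by
    rw [integral_exp_mul_complex hκ, hper]
  have h_sq : ∀ x ∈ uIcc a b, (G x - c) ^ 2 * exp (κ * x) =
      c ^ 2 * exp (κ * x) + exp (κ * x) * ∫ t in a..x, φ t := by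
    intro x hx
    rw [sq_integral_sub_eq_add_integral (uIcc_of_le hab ▸ hx).1
      (hg.mono_set (uIcc_subset_uIcc_left hx))]
    ring
  change ∫ x in a..b, (G x - c) ^ 2 * exp (κ * x) = _
  rw [intervalIntegral.integral_congr h_sq, intervalIntegral.integral_add
      ((he.intervalIntegrable _ _).const_mul _)
      ((he.intervalIntegrable _ _).mul_continuousOn
        (intervalIntegral.continuousOn_primitive_interval' hφ left_mem_uIcc)),
    intervalIntegral.integral_const_mul, h_exp, sub_self, zero_div, mul_zero, zero_add,
    integral_mul_primitive_eq_integral_mul_tail hab (he.intervalIntegrable _ _) hφ,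
    ← intervalIntegral.integral_const_mul]
  refine intervalIntegral.integral_congr fun t _ => ?_
  simp only [h_exp, φ, G]
  ring

end Primitive

theorem tendsto_intervalIntegral_mul_of_dominated_of_bounded {𝕜 ι : Type*} [RCLike 𝕜]
    {l : Filter ι} [l.IsCountablyGenerated] {μ : Measure ℝ} {a b M : ℝ} {φ h : ι → ℝ → 𝕜}
    {ψ : ℝ → ℝ} (hφm : ∀ i, AEStronglyMeasurable (φ i) (μ.restrict (Ι a b)))
    (hhm : ∀ i, AEStronglyMeasurable (h i) (μ.restrict (Ι a b)))
    (hψ : IntervalIntegrable ψ μ a b) (hφ : ∀ i, ∀ x ∈ Ι a b, ‖φ i x‖ ≤ ψ x)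
    (hh : ∀ i, ∀ x ∈ Ι a b, ‖h i x‖ ≤ M)
    (hlim : ∀ x ∈ Ι a b, Tendsto (fun i => h i x) l (𝓝 0)) :
    Tendsto (fun i => ∫ x in a..b, φ i x * h i x ∂μ) l (𝓝 0) := by
  have h_le : ∀ i, ∀ x ∈ Ι a b, ‖φ i x * h i x‖ ≤ ψ x * ‖h i x‖ := fun i x hx =>
    (norm_mul_le _ _).trans (mul_le_mul_of_nonneg_right (hφ i x hx) (norm_nonneg _))
  simpa using intervalIntegral.tendsto_integral_filter_of_dominated_convergence (fun x => ψ x * M)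
    (Eventually.of_forall fun i => (hφm i).mul (hhm i))
    (Eventually.of_forall fun i => ae_of_all _ fun x hx => (h_le i x hx).trans
      (mul_le_mul_of_nonneg_left (hh i x hx) ((norm_nonneg _).trans (hφ i x hx))))
    (hψ.mul_const M)
    (ae_of_all _ fun x hx => squeeze_zero_norm (h_le · x hx) (by
      simpa using ((hlim x hx).norm.const_mul (ψ x))))

theorem tendsto_setIntegral_mul_exp_mul_I_cocompact (f : ℝ → ℂ) {s : Set ℝ}
    (hs : MeasurableSet s) :
    Tendsto (fun ξ : ℝ => ∫ t in s, f t * exp (ξ * t * I)) (cocompact ℝ) (𝓝 0) := by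
  have hc : -(2 * Real.pi)⁻¹ ≠ 0 := by simp [Real.pi_ne_zero]
  have hmap : Tendsto (fun ξ : ℝ => -(2 * Real.pi)⁻¹ * ξ) (cocompact ℝ) (cocompact ℝ) :=
    (Homeomorph.mulLeft₀ _ hc).map_cocompact.le
  refine ((Real.tendsto_integral_exp_smul_cocompact (s.indicator f)).comp hmap).congr fun ξ => ?_
  simp only [Function.comp_apply, Circle.smul_def, Real.fourierChar_apply, smul_eq_mul]
  rw [← integral_indicator hs]
  congr 1 with t
  by_cases ht : t ∈ s
  · simp only [indicator_of_mem ht]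
    rw [mul_comm]
    congr 2
    push_cast
    field_simp
  · simp [indicator_of_notMem ht]

theorem tendsto_integral_mul_exp_mul_I_cocompact (f : ℝ → ℂ) (a b : ℝ) :
    Tendsto (fun ξ : ℝ => ∫ t in a..b, f t * exp (ξ * t * I)) (cocompact ℝ) (𝓝 0) := by
  have h := (tendsto_setIntegral_mul_exp_mul_I_cocompact f (s := Ioc a b) measurableSet_Ioc).sub
    (tendsto_setIntegral_mul_exp_mul_I_cocompact f (s := Ioc b a) measurableSet_Ioc)
  rwa [sub_zero] at h

theorem norm_exp_ofReal_mul_ofReal_mul_I (ξ t : ℝ) : ‖exp (ξ * t * I)‖ = 1 := by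
  rw [← ofReal_mul, norm_exp_ofReal_mul_I]

theorem norm_exp_sub_one_le_two {w : ℂ} (hw : w.re = 0) : ‖exp w - 1‖ ≤ 2 := by
  simpa [norm_exp, hw, one_add_one_eq_two] using norm_sub_le (exp w) 1

theorem norm_integral_mul_exp_le {f : ℝ → ℂ} {a b x : ℝ} (hf : IntervalIntegrable f volume a b)
    (hx : x ∈ Icc a b) (ξ : ℝ) :
    ‖∫ t in a..x, f t * exp (ξ * t * I)‖ ≤ ∫ t in a..b, ‖f t‖ :=
  calc ‖∫ t in a..x, f t * exp (ξ * t * I)‖ ≤ ∫ t in a..x, ‖f t * exp (ξ * t * I)‖ :=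
        intervalIntegral.norm_integral_le_integral_norm hx.1
    _ = ∫ t in a..x, ‖f t‖ := by simp only [norm_mul, norm_exp_ofReal_mul_ofReal_mul_I, mul_one]
    _ ≤ ∫ t in a..b, ‖f t‖ := intervalIntegral.integral_mono_interval le_rfl hx.1 hx.2
        (ae_of_all _ fun _ => norm_nonneg _) hf.norm

/-- The paper's `Q(x, n)` is `twistedPrimitive q (4 * π * n) x`. -/
noncomputable def twistedPrimitive (f : ℝ → ℂ) (ξ x : ℝ) : ℂ :=
  (∫ t in 0..x, f t * exp (ξ * t * I)) - (∫ t in 0..1, f t * exp (ξ * t * I)) * x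

noncomputable def twistedDeriv (f : ℝ → ℂ) (ξ t : ℝ) : ℂ :=
  f t * exp (ξ * t * I) - ∫ s in 0..1, f s * exp (ξ * s * I)

section TwistedPrimitive

variable {f : ℝ → ℂ} {x : ℝ}

theorem intervalIntegrable_twistedDeriv (hf : IntervalIntegrable f volume 0 1) (ξ : ℝ) :
    IntervalIntegrable (twistedDeriv f ξ) volume 0 1 :=
  (hf.mul_continuousOn (by fun_prop)).sub intervalIntegrable_const

theorem twistedPrimitive_eq_integral (hf : IntervalIntegrable f volume 0 1) (ξ : ℝ)
    (hx : x ∈ Icc 0 1) :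
    twistedPrimitive f ξ x = ∫ t in 0..x, twistedDeriv f ξ t := by
  have hfe : IntervalIntegrable (fun t => f t * exp (ξ * t * I)) volume 0 x :=
    (hf.mono_set (uIcc_subset_uIcc_left (Icc_subset_uIcc hx))).mul_continuousOn (by fun_prop)
  simp only [twistedPrimitive, twistedDeriv]
  rw [intervalIntegral.integral_sub hfe intervalIntegrable_const,
    intervalIntegral.integral_const, sub_zero, real_smul, mul_comm]

theorem norm_twistedDeriv_le (hf : IntervalIntegrable f volume 0 1) (ξ t : ℝ) :
    ‖twistedDeriv f ξ t‖ ≤ ‖f t‖ + ∫ s in 0..1, ‖f s‖ := by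
  refine (norm_sub_le _ _).trans (add_le_add ?_ ?_)
  · rw [norm_mul, norm_exp_ofReal_mul_ofReal_mul_I, mul_one]
  · exact norm_integral_mul_exp_le hf (right_mem_Icc.2 zero_le_one) ξ

theorem norm_twistedPrimitive_le (hf : IntervalIntegrable f volume 0 1) (ξ : ℝ)
    (hx : x ∈ Icc 0 1) :
    ‖twistedPrimitive f ξ x‖ ≤ 2 * ∫ t in 0..1, ‖f t‖ := by
  have h1 := norm_integral_mul_exp_le hf hx ξ
  have h2 := norm_integral_mul_exp_le hf (right_mem_Icc.2 zero_le_one) ξ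
  have hx' : ‖(x : ℂ)‖ ≤ 1 := by rw [norm_real, Real.norm_of_nonneg hx.1]; exact hx.2
  calc ‖twistedPrimitive f ξ x‖
      ≤ ‖∫ t in 0..x, f t * exp (ξ * t * I)‖ + ‖∫ t in 0..1, f t * exp (ξ * t * I)‖ * ‖(x : ℂ)‖ :=
        (norm_sub_le _ _).trans (add_le_add le_rfl (norm_mul_le _ _))
    _ ≤ 2 * ∫ t in 0..1, ‖f t‖ := by nlinarith [norm_nonneg (∫ t in 0..1, f t * exp (ξ * t * I))]

theorem norm_twistedPrimitive_sub_integral_le (hf : IntervalIntegrable f volume 0 1) (ξ : ℝ)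
    (hx : x ∈ Icc 0 1) :
    ‖twistedPrimitive f ξ x - ∫ y in 0..1, twistedPrimitive f ξ y‖ ≤ 4 * ∫ t in 0..1, ‖f t‖ := by
  have h_mean : ‖∫ y in 0..1, twistedPrimitive f ξ y‖ ≤ 2 * ∫ t in 0..1, ‖f t‖ := by
    refine (intervalIntegral.norm_integral_le_of_norm_le_const fun y hy =>
      norm_twistedPrimitive_le hf ξ (Ioc_subset_Icc_self ?_)).trans_eq (by norm_num)
    rwa [uIoc_of_le zero_le_one] at hy
  linarith [norm_sub_le (twistedPrimitive f ξ x) (∫ y in 0..1, twistedPrimitive f ξ y),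
    norm_twistedPrimitive_le hf ξ hx]

theorem continuousOn_twistedPrimitive (hf : IntervalIntegrable f volume 0 1) (ξ : ℝ) :
    ContinuousOn (twistedPrimitive f ξ) (Icc 0 1) := by
  have hfe : IntervalIntegrable (fun t => f t * exp (ξ * t * I)) volume 0 1 :=
    hf.mul_continuousOn (by fun_prop)
  have := intervalIntegral.continuousOn_primitive_interval' hfe left_mem_uIcc
  rw [uIcc_of_le zero_le_one] at this
  exact this.sub (by fun_prop)

theorem tendsto_twistedPrimitive_cocompact (f : ℝ → ℂ) (x : ℝ) :
    Tendsto (fun ξ => twistedPrimitive f ξ x) (cocompact ℝ) (𝓝 0) := by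
  have h := (tendsto_integral_mul_exp_mul_I_cocompact f 0 x).sub
    ((tendsto_integral_mul_exp_mul_I_cocompact f 0 1).mul_const (x : ℂ))
  rwa [zero_mul, sub_zero] at h

theorem tendsto_integral_twistedPrimitive {ι : Type*} {l : Filter ι} [l.IsCountablyGenerated]
    {ξ : ι → ℝ} (hξ : Tendsto ξ l (cocompact ℝ)) (hf : IntervalIntegrable f volume 0 1) :
    Tendsto (fun i => ∫ x in 0..1, twistedPrimitive f (ξ i) x) l (𝓝 0) := by
  have hI : Ι (0 : ℝ) 1 = Ioc 0 1 := uIoc_of_le zero_le_one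
  have h := intervalIntegral.tendsto_integral_filter_of_dominated_convergence
    (fun _ => 2 * ∫ t in 0..1, ‖f t‖)
    (Eventually.of_forall fun i => hI ▸ ((continuousOn_twistedPrimitive hf (ξ i)).mono
      Ioc_subset_Icc_self).aestronglyMeasurable measurableSet_Ioc)
    (Eventually.of_forall fun i => ae_of_all _ fun x hx =>
      norm_twistedPrimitive_le hf (ξ i) (Ioc_subset_Icc_self (hI ▸ hx)))
    (intervalIntegrable_const (μ := volume))
    (ae_of_all _ fun x _ => (tendsto_twistedPrimitive_cocompact f x).comp hξ)
  rwa [intervalIntegral.integral_zero] at h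

theorem integral_sq_twistedPrimitive_sub_mul_exp (hf : IntervalIntegrable f volume 0 1) {ξ : ℝ}
    (hξ : ξ ≠ 0) (hper : exp (2 * ξ * I) = 1) (c : ℂ) :
    ∫ x in 0..1, (twistedPrimitive f ξ x - c) ^ 2 * exp (-(2 * ξ * x) * I) =
      (2 * ξ * I)⁻¹ * ∫ t in 0..1, twistedDeriv f ξ t *
        (2 * (twistedPrimitive f ξ t - c) * (exp (-(2 * ξ * t) * I) - 1)) := by
  have hκ : -(2 * ξ * I) ≠ 0 := by simp [hξ, I_ne_zero]
  have hκ_per : exp (-(2 * ξ * I) * (1 : ℝ)) = exp (-(2 * ξ * I) * (0 : ℝ)) := by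
    simp [exp_neg, hper]
  have key := integral_sq_primitive_sub_mul_exp zero_le_one
    (intervalIntegrable_twistedDeriv hf ξ) hκ hκ_per c
  calc ∫ x in 0..1, (twistedPrimitive f ξ x - c) ^ 2 * exp (-(2 * ξ * x) * I)
      = ∫ x in 0..1, ((∫ t in 0..x, twistedDeriv f ξ t) - c) ^ 2 * exp (-(2 * ξ * I) * x) := by
        refine intervalIntegral.integral_congr fun x hx => ?_
        rw [twistedPrimitive_eq_integral hf ξ (by rwa [uIcc_of_le zero_le_one] at hx)]
        ring_nf
    _ = _ := by
        rw [key, inv_neg, neg_mul, ← mul_neg, ← intervalIntegral.integral_neg]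
        congr 1
        refine intervalIntegral.integral_congr fun t ht => ?_
        rw [twistedPrimitive_eq_integral hf ξ (by rwa [uIcc_of_le zero_le_one] at ht), ofReal_zero,
          mul_zero, exp_zero]
        ring_nf

end TwistedPrimitive

theorem tendsto_integral_twistedDeriv_mul_sub_integral {ι : Type*} {l : Filter ι}
    [l.IsCountablyGenerated] {f : ℝ → ℂ} {ξ : ι → ℝ} (hξ : Tendsto ξ l (cocompact ℝ))
    (hf : IntervalIntegrable f volume 0 1) :
    Tendsto (fun i => ∫ t in 0..1, twistedDeriv f (ξ i) t *
      (2 * (twistedPrimitive f (ξ i) t - ∫ y in 0..1, twistedPrimitive f (ξ i) y) *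
        (exp (-(2 * ξ i * t) * I) - 1))) l (𝓝 0) := by
  set c : ι → ℂ := fun i => ∫ y in 0..1, twistedPrimitive f (ξ i) y
  set C := ∫ t in 0..1, ‖f t‖
  have hI : Ι (0 : ℝ) 1 = Ioc 0 1 := uIoc_of_le zero_le_one
  refine tendsto_intervalIntegral_mul_of_dominated_of_bounded (ψ := fun t => ‖f t‖ + C)
    (M := 2 * (4 * C) * 2)
    (fun i => (intervalIntegrable_twistedDeriv hf _).def'.aestronglyMeasurable)
    (fun i => ?_) (hf.norm.add intervalIntegrable_const) (fun i t _ => norm_twistedDeriv_le hf _ t)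
    (fun i t ht => ?_) (fun t ht => ?_)
  · have : ContinuousOn (fun t => 2 * (twistedPrimitive f (ξ i) t - c i) *
        (exp (-(2 * ξ i * t) * I) - 1)) (Icc 0 1) :=
      (continuousOn_const.mul ((continuousOn_twistedPrimitive hf _).sub continuousOn_const)).mul
        (by fun_prop)
    exact (this.mono (hI ▸ Ioc_subset_Icc_self)).aestronglyMeasurable measurableSet_uIoc
  · rw [hI] at ht
    rw [norm_mul, norm_mul, Complex.norm_two]
    have hC : 0 ≤ C := intervalIntegral.integral_nonneg zero_le_one fun _ _ => norm_nonneg _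
    exact mul_le_mul (mul_le_mul_of_nonneg_left
      (norm_twistedPrimitive_sub_integral_le hf _ (Ioc_subset_Icc_self ht)) zero_le_two)
      (norm_exp_sub_one_le_two (by simp)) (norm_nonneg _) (by positivity)
  · have h_sub : Tendsto (fun i => twistedPrimitive f (ξ i) t - c i) l (𝓝 0) := by
      simpa using ((tendsto_twistedPrimitive_cocompact f t).comp hξ).sub
        (tendsto_integral_twistedPrimitive hξ hf)
    refine squeeze_zero_norm (fun i => ?_) (by simpa using (h_sub.norm.const_mul 2).mul_const 2)
    rw [norm_mul, norm_mul, Complex.norm_two]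
    exact mul_le_mul_of_nonneg_left (norm_exp_sub_one_le_two (by simp)) (by positivity)

open Real in
theorem tendsto_natCast_mul_integral_sq_twistedPrimitive_sub_integral {f : ℝ → ℂ}
    (hf : IntervalIntegrable f volume 0 1) :
    Tendsto (fun n : ℕ => (n : ℂ) * ∫ x in 0..1,
      (twistedPrimitive f (4 * π * n) x - ∫ y in 0..1, twistedPrimitive f (4 * π * n) y) ^ 2 *
        exp (-(8 * π * (n : ℝ) * x) * I)) atTop (𝓝 0) := by
  set ξ : ℕ → ℝ := fun n => 4 * π * n
  have hξ : Tendsto ξ atTop (cocompact ℝ) :=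
    (tendsto_natCast_atTop_atTop.const_mul_atTop (by positivity)).mono_right atTop_le_cocompact
  have h_lim := (tendsto_integral_twistedDeriv_mul_sub_integral hξ hf).const_mul (8 * π * I)⁻¹
  rw [mul_zero] at h_lim
  refine h_lim.congr' (eventually_ne_atTop 0 |>.mono fun n hn => Eq.symm ?_)
  have hper : exp (2 * ξ n * I) = 1 := by
    rw [← exp_nat_mul_two_pi_mul_I (4 * n)]; push_cast [ξ]; ring_nf
  have h_exp : ∀ x : ℝ, exp (-(8 * π * (n : ℝ) * x) * I) = exp (-(2 * ξ n * x) * I) :=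
    fun x => by push_cast [ξ]; ring_nf
  simp only [h_exp]
  rw [integral_sq_twistedPrimitive_sub_mul_exp hf (by simp [ξ, hn, pi_ne_zero]) hper,
    ← mul_assoc]
  congr 1
  push_cast [ξ]
  field_simp
  norm_num

theorem integral_Qxn_sq_isLittleO_general (q : ℝ → ℝ)
    (hq : IntegrableOn q (Set.Icc 0 1))
    (Q : ℕ → ℝ → ℂ)
    (hQ : ∀ n : ℕ, ∀ x : ℝ, Q n x =
      (∫ t in (0:ℝ)..x, (q t : ℂ) * Complex.exp ((4 * Real.pi * (n : ℝ) * t) * Complex.I))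
        - (∫ t in (0:ℝ)..1, (q t : ℂ) * Complex.exp ((4 * Real.pi * (n : ℝ) * t) * Complex.I)) * (x : ℂ))
    (Q0 : ℕ → ℂ) (hQ0 : ∀ n : ℕ, Q0 n = ∫ x in (0:ℝ)..1, Q n x) :
    Tendsto (fun n : ℕ => (n : ℂ) *
      ∫ x in (0:ℝ)..1, (Q n x - Q0 n)^2 * Complex.exp (-(8 * Real.pi * (n : ℝ) * x) * Complex.I))
      atTop (nhds 0) := by
  have hf : IntervalIntegrable (fun t => (q t : ℂ)) volume 0 1 :=
    (intervalIntegrable_iff_integrableOn_Icc_of_le zero_le_one).2 hq.ofReal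
  have hQ_eq : Q = fun n : ℕ => twistedPrimitive (fun t => (q t : ℂ)) (4 * Real.pi * n) := by
    ext n x
    rw [hQ, twistedPrimitive]
    push_cast
    rfl
  have hQ0_eq : Q0 = fun n => ∫ y in (0:ℝ)..1, Q n y := funext hQ0
  subst hQ0_eq hQ_eq
  exact tendsto_natCast_mul_integral_sq_twistedPrimitive_sub_integral hf

theorem integral_Qxn_sq_isLittleO (q : ℝ → ℝ)
    (hq : IntegrableOn q (Set.Icc 0 1))
    (h0 : ∫ x in (0:ℝ)..1, q x = 0)
    (Q : ℕ → ℝ → ℂ)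
    (hQ : ∀ n : ℕ, ∀ x : ℝ, Q n x =
      (∫ t in (0:ℝ)..x, (q t : ℂ) * Complex.exp ((4 * Real.pi * (n : ℝ) * t) * Complex.I))
        - (∫ t in (0:ℝ)..1, (q t : ℂ) * Complex.exp ((4 * Real.pi * (n : ℝ) * t) * Complex.I)) * (x : ℂ))
    (Q0 : ℕ → ℂ) (hQ0 : ∀ n : ℕ, Q0 n = ∫ x in (0:ℝ)..1, Q n x) :
    Tendsto (fun n : ℕ => (n : ℂ) *
      ∫ x in (0:ℝ)..1, (Q n x - Q0 n)^2 * Complex.exp (-(8 * Real.pi * (n : ℝ) * x) * Complex.I))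
      atTop (nhds 0) :=
  integral_Qxn_sq_isLittleO_general q hq Q hQ Q0 hQ0
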